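/- Under assumptions (i) M ⊥ R | X, G=2, (ii) M ⊥ G | X, and (iii) M ⊥ R | X, Y, G=1, with w(x,y) = 1/p(R=1|X=x,Y=y,G=1) strictly positive, for any function h(X,M): E[w(X,Y)·R·h(X,M) | G=1] = E[ E[h(X,M) | X, R=1, G=2] | G=1 ]. -/

import Mathlib

open Finset Set Real

noncomputable def Pr {Ω : Type*} [Fintype Ω] (μ : Ω → ℝ) (A : Set Ω) : ℝ :=
  ∑ ω, A.indicator μ ω

noncomputable def cPr {Ω : Type*} [Fintype Ω] (μ : Ω → ℝ) (A B : Set Ω) : ℝ :=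
  Pr μ (A ∩ B) / Pr μ B

noncomputable def cE {Ω : Type*} [Fintype Ω] (μ : Ω → ℝ) (f : Ω → ℝ) (B : Set Ω) : ℝ :=
  (∑ ω, B.indicator (fun ω' => μ ω' * f ω') ω) / Pr μ B


/-!
Both sides equal `E[h(X,M) | G = 1]`. On the left, condition further on `(X, Y) = (x, y)`: there
`M ⊥ R`, so `E[R h(x,M) | x, y, G = 1] = p(R = 1 | x, y, G = 1) E[h(x,M) | x, y, G = 1]`, and the
weight cancels the probability. On the right, `M ⊥ R | X, G = 2` drops the conditioning on `R = 1`,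
and `M ⊥ G | X` makes the law of `M` given `X` the same in both domains, so the inner expectation is
`E[h(X,M) | X, G = 1]`. The tower property over the fibres of `(X, Y)`, resp. `X`, concludes.
-/

lemma indicator_mul_indicator {Ω : Type*} (μ f : Ω → ℝ) (A C : Set Ω) :
    C.indicator (fun ω => μ ω * A.indicator f ω) = (A ∩ C).indicator (fun ω => μ ω * f ω) := by
  simp only [← Set.indicator_mul_right, Set.indicator_indicator, Set.inter_comm]

section General
variable {Ω : Type*} [Fintype Ω] (μ : Ω → ℝ)

lemma Pr_mono (hμ : ∀ ω, 0 ≤ μ ω) {A B : Set Ω} (hAB : A ⊆ B) : Pr μ A ≤ Pr μ B :=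
  Finset.sum_le_sum fun ω _ => Set.indicator_le_indicator_of_subset hAB hμ ω

lemma sum_indicator_eq_sum_fiber {ζ : Type*} [DecidableEq ζ] (Z : Ω → ζ) (B : Set Ω)
    (F : Ω → ℝ) :
    ∑ ω, B.indicator F ω = ∑ z ∈ univ.image Z, ∑ ω, ({ω | Z ω = z} ∩ B).indicator F ω := by
  rw [Finset.sum_comm]
  refine Finset.sum_congr rfl fun ω _ => ?_
  rw [Finset.sum_eq_single_of_mem (Z ω) (mem_image_of_mem Z (mem_univ ω))]
  · rw [← Set.indicator_indicator, Set.indicator_of_mem (s := {ω' | Z ω' = Z ω}) rfl]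
  · intro z _ hz
    simp [Ne.symm hz]

lemma cE_congr {f g : Ω → ℝ} {B : Set Ω} (hfg : Set.EqOn f g B) : cE μ f B = cE μ g B := by
  unfold cE
  rw [Set.indicator_congr fun ω hω => by rw [hfg hω]]

lemma cE_const_mul (c : ℝ) (f : Ω → ℝ) (B : Set Ω) :
    cE μ (fun ω => c * f ω) B = c * cE μ f B := by
  simp only [cE, mul_left_comm _ c, Set.indicator_const_mul, ← Finset.mul_sum, mul_div_assoc]

lemma cE_mul_Pr (f : Ω → ℝ) {B : Set Ω} (hB : Pr μ B ≠ 0) :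
    cE μ f B * Pr μ B = ∑ ω, B.indicator (fun ω => μ ω * f ω) ω :=
  div_mul_cancel₀ _ hB

lemma cE_indicator {A C : Set Ω} (f : Ω → ℝ) (hAC : Pr μ (A ∩ C) ≠ 0) :
    cE μ (A.indicator f) C = cPr μ A C * cE μ f (A ∩ C) := by
  unfold cE cPr
  rw [indicator_mul_indicator]
  field_simp

lemma cE_indicator_comp_eq_sum {𝓜 : Type*} [DecidableEq 𝓜] (M : Ω → 𝓜) (g : 𝓜 → ℝ)
    (A C : Set Ω) :
    cE μ (A.indicator fun ω => g (M ω)) C =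
      ∑ m ∈ univ.image M, g m * cPr μ ({ω | M ω = m} ∩ A) C := by
  simp only [cE, cPr, mul_div_assoc', ← Finset.sum_div, indicator_mul_indicator]
  congr 1
  rw [sum_indicator_eq_sum_fiber M]
  refine Finset.sum_congr rfl fun m _ => ?_
  rw [Set.inter_assoc, Pr, Finset.mul_sum]
  refine Finset.sum_congr rfl fun ω _ => ?_
  rw [← Set.indicator_const_mul]
  exact congrFun (Set.indicator_congr fun ω (hω : M ω = m ∧ _) => by rw [hω.1, mul_comm]) ω

lemma cE_comp_eq_sum {𝓜 : Type*} [DecidableEq 𝓜] (M : Ω → 𝓜) (g : 𝓜 → ℝ) (C : Set Ω) :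
    cE μ (fun ω => g (M ω)) C = ∑ m ∈ univ.image M, g m * cPr μ {ω | M ω = m} C := by
  simpa using cE_indicator_comp_eq_sum μ M g Set.univ C

variable {μ}

lemma cE_indicator_comp_of_condIndep {𝓜 : Type*} {M : Ω → 𝓜} {A C : Set Ω}
    (hMA : ∀ m, cPr μ ({ω | M ω = m} ∩ A) C = cPr μ {ω | M ω = m} C * cPr μ A C)
    (g : 𝓜 → ℝ) :
    cE μ (A.indicator fun ω => g (M ω)) C = cPr μ A C * cE μ (fun ω => g (M ω)) C := by
  classical
  simp only [cE_indicator_comp_eq_sum, cE_comp_eq_sum, hMA, Finset.mul_sum]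
  exact Finset.sum_congr rfl fun m _ => by ring

lemma cE_inter_comp_of_condIndep {𝓜 : Type*} {M : Ω → 𝓜} {A C : Set Ω}
    (hMA : ∀ m, cPr μ ({ω | M ω = m} ∩ A) C = cPr μ {ω | M ω = m} C * cPr μ A C)
    (hC : Pr μ C ≠ 0) (hAC : Pr μ (A ∩ C) ≠ 0) (g : 𝓜 → ℝ) :
    cE μ (fun ω => g (M ω)) (A ∩ C) = cE μ (fun ω => g (M ω)) C := by
  have hA : cPr μ A C ≠ 0 := div_ne_zero hAC hC
  apply mul_left_cancel₀ hA
  rw [← cE_indicator _ _ hAC, cE_indicator_comp_of_condIndep hMA]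

lemma cE_inv_cPr_mul_indicator_of_condIndep {𝓜 : Type*} {M : Ω → 𝓜} {A C : Set Ω}
    (hMA : ∀ m, cPr μ ({ω | M ω = m} ∩ A) C = cPr μ {ω | M ω = m} C * cPr μ A C)
    (hA : cPr μ A C ≠ 0) (g : 𝓜 → ℝ) :
    cE μ (fun ω => (cPr μ A C)⁻¹ * A.indicator (fun ω => g (M ω)) ω) C =
      cE μ (fun ω => g (M ω)) C := by
  rw [cE_const_mul, cE_indicator_comp_of_condIndep hMA, inv_mul_cancel_left₀ hA]

lemma sum_indicator_mul_cE_fiber {ζ : Type*} (Z : Ω → ζ) (B : Set Ω) (f : Ω → ℝ)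
    (hB : ∀ ω ∈ B, Pr μ ({ω' | Z ω' = Z ω} ∩ B) ≠ 0) :
    ∑ ω, B.indicator (fun ω => μ ω * cE μ f ({ω' | Z ω' = Z ω} ∩ B)) ω =
      ∑ ω, B.indicator (fun ω => μ ω * f ω) ω := by
  classical
  simp only [sum_indicator_eq_sum_fiber Z B]
  refine Finset.sum_congr rfl fun z _ => ?_
  rcases ({ω | Z ω = z} ∩ B).eq_empty_or_nonempty with hz | ⟨ω₀, rfl, hω₀⟩
  · simp [hz]
  · rw [← cE_mul_Pr μ f (hB ω₀ hω₀), Pr, Finset.mul_sum]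
    refine Finset.sum_congr rfl fun ω _ => ?_
    rw [← Set.indicator_const_mul]
    exact congrFun (Set.indicator_congr fun ω (hω : Z ω = Z ω₀ ∧ _) => by rw [hω.1, mul_comm]) ω

end General

section Model
variable {Ω 𝓧 𝓜 : Type*} [Fintype Ω] {μ : Ω → ℝ} {X : Ω → 𝓧} {M : Ω → 𝓜} {Y : Ω → ℝ}
  {R G : Ω → ℕ}

lemma Pr_pos_of_atom_subset (hμ0 : ∀ ω, 0 ≤ μ ω)
    (hpos : ∀ x ∈ Set.range X, ∀ m ∈ Set.range M, ∀ y ∈ Set.range Y, ∀ r g : ℕ,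
      (r = 0 ∨ r = 1) → (g = 1 ∨ g = 2) →
      0 < Pr μ {ω | X ω = x ∧ M ω = m ∧ Y ω = y ∧ R ω = r ∧ G ω = g})
    (ω : Ω) {g : ℕ} (hg : g = 1 ∨ g = 2) {S : Set Ω}
    (hS : {ω' | X ω' = X ω ∧ M ω' = M ω ∧ Y ω' = Y ω ∧ R ω' = 1 ∧ G ω' = g} ⊆ S) :
    0 < Pr μ S :=
  (hpos _ ⟨ω, rfl⟩ _ ⟨ω, rfl⟩ _ ⟨ω, rfl⟩ 1 g (Or.inr rfl) hg).trans_le (Pr_mono μ hμ0 hS)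

lemma sum_ipw_eq (hμ0 : ∀ ω, 0 ≤ μ ω)
    (hpos : ∀ x ∈ Set.range X, ∀ m ∈ Set.range M, ∀ y ∈ Set.range Y, ∀ r g : ℕ,
      (r = 0 ∨ r = 1) → (g = 1 ∨ g = 2) →
      0 < Pr μ {ω | X ω = x ∧ M ω = m ∧ Y ω = y ∧ R ω = r ∧ G ω = g})
    (hR : ∀ ω, R ω = 0 ∨ R ω = 1)
    (hCI : ∀ (m : 𝓜) (r : ℕ) (x : 𝓧) (y : ℝ),
      0 < Pr μ {ω | X ω = x ∧ Y ω = y ∧ G ω = 1} →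
      cPr μ {ω | M ω = m ∧ R ω = r} {ω | X ω = x ∧ Y ω = y ∧ G ω = 1} =
        cPr μ {ω | M ω = m} {ω | X ω = x ∧ Y ω = y ∧ G ω = 1} *
        cPr μ {ω | R ω = r} {ω | X ω = x ∧ Y ω = y ∧ G ω = 1})
    (h : 𝓧 → 𝓜 → ℝ) :
    ∑ ω, {ω | G ω = 1}.indicator (fun ω => μ ω *
      ((1 / cPr μ {ω' | R ω' = 1} {ω' | X ω' = X ω ∧ Y ω' = Y ω ∧ G ω' = 1}) * (R ω : ℝ) *
        h (X ω) (M ω))) ω =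
    ∑ ω, {ω | G ω = 1}.indicator (fun ω => μ ω * h (X ω) (M ω)) ω := by
  set C : Ω → Set Ω := fun ω => {ω' | X ω' = X ω ∧ Y ω' = Y ω ∧ G ω' = 1}
  have hfiber (ω : Ω) :
      {ω' | (X ω', Y ω') = (X ω, Y ω)} ∩ {ω' | G ω' = 1} = C ω := by
    ext; simp [C, and_assoc]
  have hC (ω : Ω) : 0 < Pr μ (C ω) :=
    Pr_pos_of_atom_subset hμ0 hpos ω (Or.inl rfl) fun _ ⟨hx, _, hy, _, hg⟩ => ⟨hx, hy, hg⟩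
  have hRC (ω : Ω) : 0 < Pr μ ({ω' | R ω' = 1} ∩ C ω) :=
    Pr_pos_of_atom_subset hμ0 hpos ω (Or.inl rfl) fun _ ⟨hx, _, hy, hr, hg⟩ => ⟨hr, hx, hy, hg⟩
  have tower := sum_indicator_mul_cE_fiber (μ := μ) (fun ω => (X ω, Y ω)) {ω | G ω = 1}
  simp only [hfiber] at tower
  have hC' : ∀ ω ∈ {ω | G ω = 1}, Pr μ (C ω) ≠ 0 := fun ω _ => (hC ω).ne'
  rw [← tower _ hC', ← tower (fun ω => h (X ω) (M ω)) hC']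
  refine Finset.sum_congr rfl fun ω _ => congrFun (Set.indicator_congr fun ω _ => ?_) ω
  have hw : cPr μ {ω' | R ω' = 1} (C ω) ≠ 0 := div_ne_zero (hRC ω).ne' (hC ω).ne'
  congr 1
  calc _ = cE μ (fun ω' => (cPr μ {ω' | R ω' = 1} (C ω))⁻¹ *
          {ω' | R ω' = 1}.indicator (fun ω' => h (X ω) (M ω')) ω') (C ω) :=
        cE_congr μ fun ω' ⟨hx, hy, _⟩ => by
          rcases hR ω' with hr | hr <;> simp [hr, hx, hy, C]
    _ = cE μ (fun ω' => h (X ω) (M ω')) (C ω) :=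
        cE_inv_cPr_mul_indicator_of_condIndep (fun m => hCI m 1 _ _ (hC ω)) hw _
    _ = _ := cE_congr μ fun ω' ⟨hx, _⟩ => by rw [hx]

lemma cE_complete_case_eq (hμ0 : ∀ ω, 0 ≤ μ ω)
    (hpos : ∀ x ∈ Set.range X, ∀ m ∈ Set.range M, ∀ y ∈ Set.range Y, ∀ r g : ℕ,
      (r = 0 ∨ r = 1) → (g = 1 ∨ g = 2) →
      0 < Pr μ {ω | X ω = x ∧ M ω = m ∧ Y ω = y ∧ R ω = r ∧ G ω = g})
    (hMAR : ∀ (m : 𝓜) (r : ℕ) (x : 𝓧),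
      0 < Pr μ {ω | X ω = x ∧ G ω = 2} →
      cPr μ {ω | M ω = m ∧ R ω = r} {ω | X ω = x ∧ G ω = 2} =
        cPr μ {ω | M ω = m} {ω | X ω = x ∧ G ω = 2} *
        cPr μ {ω | R ω = r} {ω | X ω = x ∧ G ω = 2})
    (hSel : ∀ (m : 𝓜) (g : ℕ) (x : 𝓧),
      0 < Pr μ {ω | X ω = x} →
      cPr μ {ω | M ω = m ∧ G ω = g} {ω | X ω = x} =
        cPr μ {ω | M ω = m} {ω | X ω = x} * cPr μ {ω | G ω = g} {ω | X ω = x})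
    (h : 𝓧 → 𝓜 → ℝ) (ω : Ω) :
    cE μ (fun ω' => h (X ω') (M ω')) {ω' | X ω' = X ω ∧ R ω' = 1 ∧ G ω' = 2} =
      cE μ (fun ω' => h (X ω') (M ω')) ({ω' | X ω' = X ω} ∩ {ω' | G ω' = 1}) := by
  have hX : 0 < Pr μ {ω' | X ω' = X ω} :=
    Pr_pos_of_atom_subset hμ0 hpos ω (Or.inl rfl) fun _ h => h.1
  have hX1 : 0 < Pr μ ({ω' | G ω' = 1} ∩ {ω' | X ω' = X ω}) :=
    Pr_pos_of_atom_subset hμ0 hpos ω (Or.inl rfl) fun _ ⟨hx, _, _, _, hg⟩ => ⟨hg, hx⟩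
  have hX2 : 0 < Pr μ ({ω' | G ω' = 2} ∩ {ω' | X ω' = X ω}) :=
    Pr_pos_of_atom_subset hμ0 hpos ω (Or.inr rfl) fun _ ⟨hx, _, _, _, hg⟩ => ⟨hg, hx⟩
  have hXR2 : 0 < Pr μ ({ω' | R ω' = 1} ∩ {ω' | X ω' = X ω ∧ G ω' = 2}) :=
    Pr_pos_of_atom_subset hμ0 hpos ω (Or.inr rfl) fun _ ⟨hx, _, _, hr, hg⟩ => ⟨hr, hx, hg⟩
  have hX2' : {ω' | X ω' = X ω ∧ G ω' = 2} = {ω' | G ω' = 2} ∩ {ω' | X ω' = X ω} :=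
    Set.ext fun _ => and_comm
  have hXR2' : {ω' | X ω' = X ω ∧ R ω' = 1 ∧ G ω' = 2} =
      {ω' | R ω' = 1} ∩ {ω' | X ω' = X ω ∧ G ω' = 2} :=
    Set.ext fun _ => and_left_comm
  calc cE μ (fun ω' => h (X ω') (M ω')) {ω' | X ω' = X ω ∧ R ω' = 1 ∧ G ω' = 2}
      = cE μ (fun ω' => h (X ω) (M ω')) ({ω' | R ω' = 1} ∩ {ω' | X ω' = X ω ∧ G ω' = 2}) := by
        rw [hXR2']
        exact cE_congr μ fun ω' ⟨_, hx, _⟩ => by rw [hx]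
    _ = cE μ (fun ω' => h (X ω) (M ω')) ({ω' | G ω' = 2} ∩ {ω' | X ω' = X ω}) := by
        rw [cE_inter_comp_of_condIndep (A := {ω' | R ω' = 1}) (fun m => hMAR m 1 _ (hX2' ▸ hX2)) (hX2' ▸ hX2).ne'
          hXR2.ne' (h (X ω)), hX2']
    _ = cE μ (fun ω' => h (X ω) (M ω')) ({ω' | G ω' = 1} ∩ {ω' | X ω' = X ω}) := by
        rw [cE_inter_comp_of_condIndep (A := {ω' | G ω' = 2}) (fun m => hSel m 2 _ hX) hX.ne' hX2.ne' (h (X ω)),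
          cE_inter_comp_of_condIndep (A := {ω' | G ω' = 1}) (fun m => hSel m 1 _ hX) hX.ne' hX1.ne' (h (X ω))]
    _ = cE μ (fun ω' => h (X ω') (M ω')) ({ω' | X ω' = X ω} ∩ {ω' | G ω' = 1}) := by
        rw [Set.inter_comm]
        exact cE_congr μ fun ω' ⟨hx, _⟩ => by rw [hx]

lemma sum_cE_complete_case_eq (hμ0 : ∀ ω, 0 ≤ μ ω)
    (hpos : ∀ x ∈ Set.range X, ∀ m ∈ Set.range M, ∀ y ∈ Set.range Y, ∀ r g : ℕ,
      (r = 0 ∨ r = 1) → (g = 1 ∨ g = 2) →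
      0 < Pr μ {ω | X ω = x ∧ M ω = m ∧ Y ω = y ∧ R ω = r ∧ G ω = g})
    (hMAR : ∀ (m : 𝓜) (r : ℕ) (x : 𝓧),
      0 < Pr μ {ω | X ω = x ∧ G ω = 2} →
      cPr μ {ω | M ω = m ∧ R ω = r} {ω | X ω = x ∧ G ω = 2} =
        cPr μ {ω | M ω = m} {ω | X ω = x ∧ G ω = 2} *
        cPr μ {ω | R ω = r} {ω | X ω = x ∧ G ω = 2})
    (hSel : ∀ (m : 𝓜) (g : ℕ) (x : 𝓧),
      0 < Pr μ {ω | X ω = x} →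
      cPr μ {ω | M ω = m ∧ G ω = g} {ω | X ω = x} =
        cPr μ {ω | M ω = m} {ω | X ω = x} * cPr μ {ω | G ω = g} {ω | X ω = x})
    (h : 𝓧 → 𝓜 → ℝ) :
    ∑ ω, {ω | G ω = 1}.indicator (fun ω => μ ω *
      cE μ (fun ω' => h (X ω') (M ω')) {ω' | X ω' = X ω ∧ R ω' = 1 ∧ G ω' = 2}) ω =
    ∑ ω, {ω | G ω = 1}.indicator (fun ω => μ ω * h (X ω) (M ω)) ω := by
  simp_rw [cE_complete_case_eq hμ0 hpos hMAR hSel h]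
  exact sum_indicator_mul_cE_fiber X _ _ fun ω _ =>
    (Pr_pos_of_atom_subset hμ0 hpos ω (Or.inl rfl) (S := {ω' | X ω' = X ω} ∩ {ω | G ω = 1})
      fun _ ⟨hx, _, _, _, hg⟩ => ⟨hx, hg⟩).ne'

end Model

theorem stmt14_general
    {Ω 𝓧 𝓜 : Type*} [Fintype Ω]
    (μ : Ω → ℝ) (X : Ω → 𝓧) (M : Ω → 𝓜) (Y : Ω → ℝ) (R G : Ω → ℕ)
    (h : 𝓧 → 𝓜 → ℝ)
    (hμ0 : ∀ ω, 0 ≤ μ ω)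
    (hR : ∀ ω, R ω = 0 ∨ R ω = 1)
    (hpos : ∀ x ∈ Set.range X, ∀ m ∈ Set.range M, ∀ y ∈ Set.range Y, ∀ r g : ℕ,
      (r = 0 ∨ r = 1) → (g = 1 ∨ g = 2) →
      0 < Pr μ {ω | X ω = x ∧ M ω = m ∧ Y ω = y ∧ R ω = r ∧ G ω = g})
    (hMAR : ∀ (m : 𝓜) (r : ℕ) (x : 𝓧),
      0 < Pr μ {ω | X ω = x ∧ G ω = 2} →
      cPr μ {ω | M ω = m ∧ R ω = r} {ω | X ω = x ∧ G ω = 2} =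
        cPr μ {ω | M ω = m} {ω | X ω = x ∧ G ω = 2} *
        cPr μ {ω | R ω = r} {ω | X ω = x ∧ G ω = 2})
    (hSel : ∀ (m : 𝓜) (g : ℕ) (x : 𝓧),
      0 < Pr μ {ω | X ω = x} →
      cPr μ {ω | M ω = m ∧ G ω = g} {ω | X ω = x} =
        cPr μ {ω | M ω = m} {ω | X ω = x} * cPr μ {ω | G ω = g} {ω | X ω = x})
    (hCI : ∀ (m : 𝓜) (r : ℕ) (x : 𝓧) (y : ℝ),
      0 < Pr μ {ω | X ω = x ∧ Y ω = y ∧ G ω = 1} →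
      cPr μ {ω | M ω = m ∧ R ω = r} {ω | X ω = x ∧ Y ω = y ∧ G ω = 1} =
        cPr μ {ω | M ω = m} {ω | X ω = x ∧ Y ω = y ∧ G ω = 1} *
        cPr μ {ω | R ω = r} {ω | X ω = x ∧ Y ω = y ∧ G ω = 1})
 :
    cE μ (fun ω =>
        (1 / cPr μ {ω' | R ω' = 1} {ω' | X ω' = X ω ∧ Y ω' = Y ω ∧ G ω' = 1}) * (R ω : ℝ) *
          h (X ω) (M ω))
      {ω | G ω = 1} =
    cE μ (fun ω =>
        cE μ (fun ω' => h (X ω') (M ω')) {ω' | X ω' = X ω ∧ R ω' = 1 ∧ G ω' = 2})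
      {ω | G ω = 1} :=
  congrArg (· / Pr μ {ω | G ω = 1}) ((sum_ipw_eq hμ0 hpos hR hCI h).trans
    (sum_cE_complete_case_eq hμ0 hpos hMAR hSel h).symm)

theorem stmt14
    {Ω 𝓧 𝓜 : Type*} [Fintype Ω]
    (μ : Ω → ℝ) (X : Ω → 𝓧) (M : Ω → 𝓜) (Y : Ω → ℝ) (R G : Ω → ℕ)
    (h : 𝓧 → 𝓜 → ℝ)
    (hμ0 : ∀ ω, 0 ≤ μ ω) (hμ1 : ∑ ω, μ ω = 1)
    (hR : ∀ ω, R ω = 0 ∨ R ω = 1)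
    (hG : ∀ ω, G ω = 1 ∨ G ω = 2)
    (hpos : ∀ x ∈ Set.range X, ∀ m ∈ Set.range M, ∀ y ∈ Set.range Y, ∀ r g : ℕ,
      (r = 0 ∨ r = 1) → (g = 1 ∨ g = 2) →
      0 < Pr μ {ω | X ω = x ∧ M ω = m ∧ Y ω = y ∧ R ω = r ∧ G ω = g})
    (hMAR : ∀ (m : 𝓜) (r : ℕ) (x : 𝓧),
      0 < Pr μ {ω | X ω = x ∧ G ω = 2} →
      cPr μ {ω | M ω = m ∧ R ω = r} {ω | X ω = x ∧ G ω = 2} =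
        cPr μ {ω | M ω = m} {ω | X ω = x ∧ G ω = 2} *
        cPr μ {ω | R ω = r} {ω | X ω = x ∧ G ω = 2})
    (hSel : ∀ (m : 𝓜) (g : ℕ) (x : 𝓧),
      0 < Pr μ {ω | X ω = x} →
      cPr μ {ω | M ω = m ∧ G ω = g} {ω | X ω = x} =
        cPr μ {ω | M ω = m} {ω | X ω = x} * cPr μ {ω | G ω = g} {ω | X ω = x})
    (hCI : ∀ (m : 𝓜) (r : ℕ) (x : 𝓧) (y : ℝ),
      0 < Pr μ {ω | X ω = x ∧ Y ω = y ∧ G ω = 1} →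
      cPr μ {ω | M ω = m ∧ R ω = r} {ω | X ω = x ∧ Y ω = y ∧ G ω = 1} =
        cPr μ {ω | M ω = m} {ω | X ω = x ∧ Y ω = y ∧ G ω = 1} *
        cPr μ {ω | R ω = r} {ω | X ω = x ∧ Y ω = y ∧ G ω = 1})
 :
    cE μ (fun ω =>
        (1 / cPr μ {ω' | R ω' = 1} {ω' | X ω' = X ω ∧ Y ω' = Y ω ∧ G ω' = 1}) * (R ω : ℝ) *
          h (X ω) (M ω))
      {ω | G ω = 1} =
    cE μ (fun ω =>
        cE μ (fun ω' => h (X ω') (M ω')) {ω' | X ω' = X ω ∧ R ω' = 1 ∧ G ω' = 2})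
      {ω | G ω = 1} :=
  stmt14_general μ X M Y R G h hμ0 hR hpos hMAR hSel hCI
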